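/- The RDS integral of a step function is independent of the chosen partition: if f is a step function on [a,b] with respect to both partitions P and Q, and α is of bounded variation on [a,b], then the RDS step-function integrals of f with respect to α computed via P and via Q are equal. -/

import Mathlib

open Set Filter Topology
open scoped Classical

noncomputable section

/-- A partition `a = x 0 < x 1 < ... < x n = b` of `[a,b]`. -/
structure RDSPartition (a b : ℝ) where
  n : ℕ
  x : ℕ → ℝ
  mono : ∀ i, i < n → x i < x (i + 1)
  first : x 0 = a
  last : x n = b

/-- Right limit `α(t+)`, with the convention `α(b+) = α(b)` at the right endpoint. -/
def rLim (b : ℝ) (α : ℝ → ℝ) (t : ℝ) : ℝ :=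
  if t < b then Function.rightLim α t else α t

/-- Left limit `α(t-)`, with the convention `α(a-) = α(a)` at the left endpoint. -/
def lLim (a : ℝ) (α : ℝ → ℝ) (t : ℝ) : ℝ :=
  if a < t then Function.leftLim α t else α t

/-- `α`-length of the singleton `{t}` inside `[a,b]`: `α(t+) - α(t-)`. -/
def muPt (a b : ℝ) (α : ℝ → ℝ) (t : ℝ) : ℝ :=
  rLim b α t - lLim a α t

/-- `α`-length of the open interval `(c,d)` inside `[a,b]`: `α(d-) - α(c+)`. -/
def muIoo (a b : ℝ) (α : ℝ → ℝ) (c d : ℝ) : ℝ :=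
  lLim a α d - rLim b α c

/-- `f` is a step function with respect to the partition `P`: it is constant on each
open subinterval `(x (i-1), x i)` of `P`. -/
def IsStepOn (a b : ℝ) (f : ℝ → ℝ) (P : RDSPartition a b) : Prop :=
  ∀ i, i < P.n → ∀ s ∈ Set.Ioo (P.x i) (P.x (i + 1)),
    f s = f ((P.x i + P.x (i + 1)) / 2)

/-- The RDS integral of a step function with respect to the partition `P`:
`Σ_{i=0}^n f(x_i) μ_α({x_i}) + Σ_{i=1}^n c_i μ_α(I_i)`. -/
def stepInt (a b : ℝ) (α : ℝ → ℝ) (P : RDSPartition a b) (f : ℝ → ℝ) : ℝ :=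
  (∑ i ∈ Finset.range (P.n + 1), f (P.x i) * muPt a b α (P.x i)) +
    ∑ i ∈ Finset.range P.n,
      f ((P.x i + P.x (i + 1)) / 2) * muIoo a b α (P.x i) (P.x (i + 1))

/-- Upper envelope: infimum of RDS step integrals of step functions above `f` on `[a,b]`. -/
def upperRDS (a b : ℝ) (α f : ℝ → ℝ) : ℝ :=
  sInf { r | ∃ (u : ℝ → ℝ) (P : RDSPartition a b), IsStepOn a b u P ∧
    (∀ t ∈ Set.Icc a b, f t ≤ u t) ∧ r = stepInt a b α P u }

/-- Lower envelope: supremum of RDS step integrals of step functions below `f` on `[a,b]`. -/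
def lowerRDS (a b : ℝ) (α f : ℝ → ℝ) : ℝ :=
  sSup { r | ∃ (v : ℝ → ℝ) (P : RDSPartition a b), IsStepOn a b v P ∧
    (∀ t ∈ Set.Icc a b, v t ≤ f t) ∧ r = stepInt a b α P v }

/-- RDS integrability with respect to an increasing integrator. -/
def RDSIntegrableInc (a b : ℝ) (α f : ℝ → ℝ) : Prop :=
  lowerRDS a b α f = upperRDS a b α f

/-- The RDS integral with respect to an increasing integrator. -/
def RDSIntegralInc (a b : ℝ) (α f : ℝ → ℝ) : ℝ := upperRDS a b α f

/-- RDS integrability with respect to a BV integrator: some Jordan decomposition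
into increasing functions works. -/
def RDSIntegrable (a b : ℝ) (α f : ℝ → ℝ) : Prop :=
  ∃ αp αm : ℝ → ℝ, MonotoneOn αp (Set.Icc a b) ∧ MonotoneOn αm (Set.Icc a b) ∧
    (∀ t ∈ Set.Icc a b, α t = αp t - αm t) ∧
    RDSIntegrableInc a b αp f ∧ RDSIntegrableInc a b αm f

/-- The RDS integral with respect to a BV integrator. -/
def RDSIntegral (a b : ℝ) (α f : ℝ → ℝ) : ℝ :=
  if h : RDSIntegrable a b α f then
    RDSIntegralInc a b h.choose f - RDSIntegralInc a b h.choose_spec.choose f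
  else 0

/-- `f` is bounded on `[a,b]`. -/
def BddOn (a b : ℝ) (f : ℝ → ℝ) : Prop :=
  ∃ M : ℝ, ∀ t ∈ Set.Icc a b, |f t| ≤ M

end

/-!
Over a partition `a = x₀ < ⋯ < xₙ = b`, the step integral is
`f a * μ{a} + ∑ g (x_{i-1}) (x_i)` with `g u v = f((u+v)/2) * μ(u,v) + f v * μ{v}`.
If `f` is constant on `(u,v)` and `u < t < v`, then `g u t + g t v = g u v`, because
`μ(u,t) + μ{t} + μ(t,v)` telescopes to `μ(u,v)`. So inserting points into a partition on which
`f` is a step function does not change the sum, and `P`, `Q` are compared through their common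
refinement.
-/

section Chains

variable {α M : Type*} [AddCommMonoid M] (g : α → α → M)

def chainSum : α → List α → M
  | _, [] => 0
  | u, v :: l => g u v + chainSum v l

theorem chainSum_map_range (x : ℕ → α) (n : ℕ) :
    chainSum g (x 0) ((List.range n).map fun i => x (i + 1)) =
      ∑ i ∈ Finset.range n, g (x i) (x (i + 1)) := by
  induction n generalizing x with
  | zero => rfl
  | succ n ih =>
    rw [List.range_succ_eq_map, List.map_cons, List.map_map, chainSum, Finset.sum_range_succ',
      add_comm]
    exact congrArg (· + _) (ih fun i => x (i + 1))

variable [LinearOrder α]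

def IsAdditiveOn (u v : α) : Prop :=
  ∀ t₁ t₂, u ≤ t₁ → t₁ < t₂ → t₂ < v → g t₁ t₂ + g t₂ v = g t₁ v

variable {g}

theorem IsAdditiveOn.mono_left {u u' v : α} (h : IsAdditiveOn g u v) (hu : u ≤ u') :
    IsAdditiveOn g u' v :=
  fun t₁ t₂ h₁ => h t₁ t₂ (hu.trans h₁)

theorem chainSum_append_cons {u v : α} {ms : List α} (hg : IsAdditiveOn g u v)
    (h : (u :: (ms ++ [v])).Pairwise (· < ·)) (l : List α) :
    chainSum g u (ms ++ v :: l) = g u v + chainSum g v l := by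
  induction ms generalizing u with
  | nil => rfl
  | cons m ms ih =>
    obtain ⟨hu, hm⟩ := List.pairwise_cons.1 h
    have hum : u < m := hu m List.mem_cons_self
    have hmv : m < v := (List.pairwise_cons.1 hm).1 v (by simp)
    rw [List.cons_append, chainSum, ih (hg.mono_left hum.le) hm, ← add_assoc,
      hg u m le_rfl hum hmv]

theorem chainSum_eq_of_subset {u : α} {C L : List α} (hC : (u :: C).Pairwise (· < ·))
    (hL : (u :: L).Pairwise (· < ·)) (hCL : C ⊆ L)
    (hLC : ∀ x ∈ L, ∃ y ∈ u :: C, x ≤ y)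
    (hg : (u :: C).IsChain (IsAdditiveOn g)) : chainSum g u L = chainSum g u C := by
  induction C generalizing u L with
  | nil =>
    suffices L = [] by rw [this]
    refine List.eq_nil_iff_forall_not_mem.2 fun x hx => ?_
    obtain ⟨y, hy, hxy⟩ := hLC x hx
    rw [List.mem_singleton.1 hy] at hxy
    exact (List.rel_of_pairwise_cons hL hx).not_ge hxy
  | cons v C ih =>
    obtain ⟨ms, L, rfl⟩ := List.append_of_mem (hCL List.mem_cons_self)
    obtain ⟨huv, hg⟩ := List.isChain_cons_cons.1 hg
    have huv_lt : u < v := List.rel_of_pairwise_cons hC List.mem_cons_self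
    have hms : ∀ m ∈ ms, m < v := fun m hm =>
      (List.pairwise_append.1 hL.of_cons).2.2 m hm v List.mem_cons_self
    have hvL : (v :: L).Pairwise (· < ·) :=
      hL.of_cons.sublist (List.sublist_append_right ms _)
    have hsplit : (u :: (ms ++ [v])).Pairwise (· < ·) :=
      hL.sublist ((List.Sublist.cons_cons v (List.nil_sublist L)).append_left ms |>.cons_cons u)
    rw [chainSum_append_cons huv hsplit, chainSum]
    refine congrArg (g u v + ·) (ih hC.of_cons hvL (fun x hx => ?_) (fun x hx => ?_) hg)
    · have hvx : v < x := List.rel_of_pairwise_cons hC.of_cons hx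
      rcases List.mem_append.1 (hCL (List.mem_cons_of_mem v hx)) with hxm | hxL
      · exact absurd (hms x hxm) hvx.asymm
      · exact (List.mem_cons.1 hxL).resolve_left hvx.ne'
    · have hvx : v < x := List.rel_of_pairwise_cons hvL hx
      obtain ⟨y, hy, hxy⟩ := hLC x (by simp [hx])
      refine ⟨y, (List.mem_cons.1 hy).resolve_left ?_, hxy⟩
      rintro rfl
      exact hxy.not_gt (huv_lt.trans hvx)

end Chains

namespace RDSPartition

variable {a b : ℝ} (P : RDSPartition a b)

theorem strictMonoOn_x : StrictMonoOn P.x (Iic P.n) :=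
  strictMonoOn_Iic_of_lt_succ P.mono

def tailNodes : List ℝ := (List.range P.n).map fun i => P.x (i + 1)

theorem cons_tailNodes : a :: P.tailNodes = (List.range (P.n + 1)).map P.x := by
  rw [List.range_succ_eq_map, List.map_cons, List.map_map, P.first]
  rfl

theorem pairwise_cons_tailNodes : (a :: P.tailNodes).Pairwise (· < ·) := by
  rw [cons_tailNodes, List.pairwise_map]
  refine List.pairwise_lt_range.imp_of_mem fun hi hj hij => P.strictMonoOn_x ?_ ?_ hij
  · exact Nat.lt_succ_iff.1 (List.mem_range.1 hi)
  · exact Nat.lt_succ_iff.1 (List.mem_range.1 hj)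

theorem b_mem_cons_tailNodes : b ∈ a :: P.tailNodes := by
  rw [cons_tailNodes]
  exact List.mem_map.2 ⟨P.n, List.mem_range.2 P.n.lt_succ_self, P.last⟩

theorem mem_Ioc_of_mem_tailNodes {t : ℝ} (ht : t ∈ P.tailNodes) : t ∈ Ioc a b := by
  obtain ⟨i, hi, rfl⟩ := List.mem_map.1 ht
  have hi : i + 1 ≤ P.n := List.mem_range.1 hi
  have hx0 := P.strictMonoOn_x (Nat.zero_le _) hi i.succ_pos
  have hxn := P.strictMonoOn_x.monotoneOn hi (le_refl P.n) hi
  rw [P.first] at hx0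
  rw [P.last] at hxn
  exact ⟨hx0, hxn⟩

end RDSPartition

noncomputable def stepTerm (a b : ℝ) (α f : ℝ → ℝ) (u v : ℝ) : ℝ :=
  f ((u + v) / 2) * muIoo a b α u v + f v * muPt a b α v

theorem isAdditiveOn_stepTerm {a b : ℝ} {α f : ℝ → ℝ} {u v c : ℝ}
    (hf : ∀ s ∈ Ioo u v, f s = c) : IsAdditiveOn (stepTerm a b α f) u v := by
  intro t₁ t₂ hut₁ ht₁₂ ht₂v
  have mem {s} (h₁ : t₁ < s) (h₂ : s < v) : s ∈ Ioo u v := ⟨hut₁.trans_lt h₁, h₂⟩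
  simp only [stepTerm, muIoo, muPt]
  rw [hf t₂ (mem ht₁₂ ht₂v), hf ((t₁ + t₂) / 2) (mem (by linarith) (by linarith)),
    hf ((t₂ + v) / 2) (mem (by linarith) (by linarith)),
    hf ((t₁ + v) / 2) (mem (by linarith) (by linarith))]
  ring

theorem stepInt_eq_chainSum {a b : ℝ} (α f : ℝ → ℝ) (P : RDSPartition a b) :
    stepInt a b α P f = f a * muPt a b α a + chainSum (stepTerm a b α f) a P.tailNodes := by
  have h := chainSum_map_range (stepTerm a b α f) P.x P.n
  rw [P.first] at h
  rw [RDSPartition.tailNodes, h, stepInt, Finset.sum_range_succ', P.first]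
  simp only [stepTerm, Finset.sum_add_distrib]
  ring

theorem stepInt_eq_chainSum_of_subset {a b : ℝ} {α f : ℝ → ℝ} {P : RDSPartition a b}
    (hP : IsStepOn a b f P) {M : List ℝ} (hM : (a :: M).Pairwise (· < ·))
    (hPM : P.tailNodes ⊆ M) (hMb : ∀ x ∈ M, x ≤ b) :
    stepInt a b α P f = f a * muPt a b α a + chainSum (stepTerm a b α f) a M := by
  have hchain : (a :: P.tailNodes).IsChain (IsAdditiveOn (stepTerm a b α f)) := by
    rw [P.cons_tailNodes, List.isChain_map, List.isChain_range_succ]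
    exact fun i hi => isAdditiveOn_stepTerm (hP i hi)
  rw [stepInt_eq_chainSum, chainSum_eq_of_subset P.pairwise_cons_tailNodes hM hPM
    (fun x hx => ⟨b, P.b_mem_cons_tailNodes, hMb x hx⟩) hchain]

theorem stmt0_general (a b : ℝ) (α : ℝ → ℝ) (f : ℝ → ℝ)
    (P Q : RDSPartition a b) (hP : IsStepOn a b f P) (hQ : IsStepOn a b f Q) :
    stepInt a b α P f = stepInt a b α Q f := by
  set M := (P.tailNodes.toFinset ∪ Q.tailNodes.toFinset).sort
  have hM : ∀ x ∈ M, x ∈ Ioc a b := by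
    intro x hx
    rcases Finset.mem_union.1 ((Finset.mem_sort _).1 hx) with h | h
    · exact P.mem_Ioc_of_mem_tailNodes (List.mem_toFinset.1 h)
    · exact Q.mem_Ioc_of_mem_tailNodes (List.mem_toFinset.1 h)
  have haM : (a :: M).Pairwise (· < ·) :=
    List.pairwise_cons.2 ⟨fun x hx => (hM x hx).1, (Finset.sortedLT_sort _).pairwise⟩
  have hsub {l : List ℝ} (h : l.toFinset ⊆ P.tailNodes.toFinset ∪ Q.tailNodes.toFinset) :
      l ⊆ M := fun x hx => (Finset.mem_sort _).2 (h (List.mem_toFinset.2 hx))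
  have hMb : ∀ x ∈ M, x ≤ b := fun x hx => (hM x hx).2
  rw [stepInt_eq_chainSum_of_subset hP haM (hsub Finset.subset_union_left) hMb,
    stepInt_eq_chainSum_of_subset hQ haM (hsub Finset.subset_union_right) hMb]

theorem stmt0 (a b : ℝ) (hab : a < b) (α : ℝ → ℝ)
    (hα : BoundedVariationOn α (Set.Icc a b)) (f : ℝ → ℝ)
    (P Q : RDSPartition a b) (hP : IsStepOn a b f P) (hQ : IsStepOn a b f Q) :
    stepInt a b α P f = stepInt a b α Q f :=
  stmt0_general a b α f P Q hP hQ
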